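/- arXiv:2010.14432 — 5 statements merged into one kernel-verified Lean document; each statement's English description precedes it below -/
import Mathlib

section
/- Let θ₁,...,θ_k, φ₁,...,φ_k be real numbers such that for all integers a₁,...,a_k, if Σ aᵢθᵢ ∈ ℤ then Σ aᵢφᵢ ∈ ℤ. Then for every ε > 0 there exist n ∈ ℕ and integers r₁,...,r_k such that |n θᵢ − rᵢ − φᵢ| ≤ ε for all i. -/
/-!
Put `x = (θᵢ)` and `y = (φᵢ)` on the torus `𝕋ᵏ`; the hypothesis says that every character
`e(∑ aᵢtᵢ)` trivial at `x` is trivial at `y`. Let `H` be the closure of `ℤx`, with Haar measure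
`μ`. For a character `χ`, `∫_H χ(y + h) dμ = χ(y) ∫_H χ dμ`, and `∫_H χ dμ = 0` unless `χ` is
trivial on `H`; so `μ` and its translate by `y` integrate every character, hence (the characters
span a dense subspace of `C(𝕋ᵏ, ℂ)`) every continuous function, to the same value. An Urysohn
function vanishing on `H` and equal to `1` on `y + H` rules this out unless `y ∈ H`. Finally, in a
compact group the closures of `ℤx` and `ℕx` coincide.
-/

open MeasureTheory Set Submodule

namespace ContinuousMap

variable {X : Type*} [TopologicalSpace X] [CompactSpace X] [MeasurableSpace X] [BorelSpace X]

noncomputable def integralCLM (ν : Measure X) [IsFiniteMeasure ν] : C(X, ℂ) →L[ℂ] ℂ :=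
  (L1.integralCLM' ℂ).comp (toLp 1 ν ℂ)

theorem integralCLM_apply (ν : Measure X) [IsFiniteMeasure ν] (F : C(X, ℂ)) :
    integralCLM ν F = ∫ x, F x ∂ν := by
  rw [integralCLM, ContinuousLinearMap.comp_apply, ← L1.integral_eq', L1.integral_eq_integral]
  exact integral_congr_ae (coeFn_toLp ν F)

end ContinuousMap

theorem integral_eq_of_span_closure_eq_top {X : Type*} [TopologicalSpace X] [CompactSpace X]
    [MeasurableSpace X] [BorelSpace X] {ν ν' : Measure X} [IsFiniteMeasure ν]
    [IsFiniteMeasure ν'] {s : Set C(X, ℂ)} (hs : (span ℂ s).topologicalClosure = ⊤)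
    (h : ∀ F ∈ s, ∫ x, F x ∂ν = ∫ x, F x ∂ν') (F : C(X, ℂ)) :
    ∫ x, F x ∂ν = ∫ x, F x ∂ν' := by
  let Λ := ContinuousMap.integralCLM ν - ContinuousMap.integralCLM ν'
  have hs_ker : span ℂ s ≤ LinearMap.ker (Λ : C(X, ℂ) →ₗ[ℂ] ℂ) := span_le.mpr fun G hG => by
    simp [Λ, ContinuousMap.integralCLM_apply, h G hG]
  have hF : F ∈ LinearMap.ker (Λ : C(X, ℂ) →ₗ[ℂ] ℂ) :=
    topologicalClosure_minimal _ hs_ker Λ.isClosed_ker (hs ▸ mem_top)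
  simpa [Λ, ContinuousMap.integralCLM_apply, sub_eq_zero] using hF

theorem integral_eq_zero_of_map_add_eq_mul {K : Type*} [AddGroup K] [MeasurableSpace K]
    [MeasurableAdd K] {μ : Measure K} [μ.IsAddLeftInvariant] {χ : K → ℂ}
    (hχ : ∀ a b, χ (a + b) = χ a * χ b) {a : K} (ha : χ a ≠ 1) : ∫ h, χ h ∂μ = 0 := by
  have hinv : χ a * ∫ h, χ h ∂μ = ∫ h, χ h ∂μ := by
    simpa only [hχ, integral_const_mul] using integral_add_left_eq_self (μ := μ) χ a
  have : (χ a - 1) * ∫ h, χ h ∂μ = 0 := by rw [sub_mul, one_mul, hinv, sub_self]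
  exact (mul_eq_zero.mp this).resolve_left (sub_ne_zero.mpr ha)

theorem AddSubgroup.mem_of_forall_map_eq_one {G ι : Type*} [AddCommGroup G] [TopologicalSpace G]
    [IsTopologicalAddGroup G] [CompactSpace G] [T2Space G] [MeasurableSpace G] [BorelSpace G]
    (χ : ι → C(G, ℂ)) (hχ : ∀ j a b, χ j (a + b) = χ j a * χ j b)
    (hχ_dense : (span ℂ (range χ)).topologicalClosure = ⊤) {H : AddSubgroup G}
    (hH : IsClosed (H : Set G)) {y : G} (hy : ∀ j, (∀ h ∈ H, χ j h = 1) → χ j y = 1) :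
    y ∈ H := by
  by_contra hyH
  have : CompactSpace H := isCompact_iff_compactSpace.mp hH.isCompact
  let : MeasurableSpace H := borel H
  have : BorelSpace H := ⟨rfl⟩
  let μ : Measure H := Measure.addHaarMeasure ⊤
  have hval : Measurable ((↑) : H → G) := continuous_subtype_val.measurable
  have hyval : Measurable fun h : H => y + h :=
    (continuous_const.add continuous_subtype_val).measurable
  have hmap (F : C(G, ℂ)) (f : H → G) (hf : Measurable f) :
      ∫ g, F g ∂μ.map f = ∫ h, F (f h) ∂μ :=
    integral_map hf.aemeasurable F.continuous.aestronglyMeasurable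
  have hchar (j : ι) : ∫ g, χ j g ∂μ.map (fun h : H => y + h) = ∫ g, χ j g ∂μ.map (↑) := by
    rw [hmap _ _ hyval, hmap _ _ hval]
    simp only [hχ, integral_const_mul]
    by_cases hj : ∀ h ∈ H, χ j h = 1
    · rw [hy j hj, one_mul]
    · push Not at hj
      obtain ⟨a, ha, hja⟩ := hj
      rw [integral_eq_zero_of_map_add_eq_mul (χ := fun h : H => χ j h) (fun a b => hχ j a b)
        (a := ⟨a, ha⟩) hja, mul_zero]
  have hyH_closed : IsClosed ((y + ·) '' (H : Set G)) := (Homeomorph.addLeft y).isClosedMap _ hH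
  have hdisj : Disjoint (H : Set G) ((y + ·) '' (H : Set G)) := by
    rw [Set.disjoint_left]
    rintro _ hg ⟨h, hh, rfl⟩
    exact hyH (by simpa using H.sub_mem hg hh)
  obtain ⟨f, hf0, hf1, -⟩ := exists_continuous_zero_one_of_isClosed hH hyH_closed hdisj
  let F : C(G, ℂ) := (⟨Complex.ofReal, Complex.continuous_ofReal⟩ : C(ℝ, ℂ)).comp f
  have key := integral_eq_of_span_closure_eq_top hχ_dense (by simpa using hchar) F
  rw [hmap _ _ hyval, hmap _ _ hval] at key
  have h1 (h : H) : F (y + h) = 1 := by simp [F, hf1 ⟨h, h.2, rfl⟩]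
  have h0 (h : H) : F h = 0 := by simp [F, hf0 h.2]
  simp only [h1, h0, integral_const, smul_zero, Complex.real_smul, mul_one,
    Complex.ofReal_eq_zero] at key
  exact (measureReal_univ_pos (μ := μ)).ne' key

namespace UnitAddTorus

variable {d : Type*} [Fintype d]

theorem mFourier_apply_add (n : d → ℤ) (x y : UnitAddTorus d) :
    mFourier n (x + y) = mFourier n x * mFourier n y := by
  simp only [mFourier, ContinuousMap.coe_mk, Pi.add_apply, fourier_apply, smul_add,
    AddCircle.toCircle_add, Circle.coe_mul, Finset.prod_mul_distrib]

theorem mFourier_coe_apply (n : d → ℤ) (u : d → ℝ) :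
    mFourier n (fun i => (u i : UnitAddCircle)) =
      Complex.exp (2 * Real.pi * Complex.I * ∑ i, (n i : ℝ) * u i) := by
  simp only [mFourier, ContinuousMap.coe_mk, fourier_coe_apply, Complex.ofReal_one, div_one,
    ← Complex.exp_sum]
  push_cast
  rw [Finset.mul_sum]
  simp only [mul_assoc]

theorem mFourier_coe_eq_one_iff (n : d → ℤ) (u : d → ℝ) :
    mFourier n (fun i => (u i : UnitAddCircle)) = 1 ↔ ∃ m : ℤ, ∑ i, (n i : ℝ) * u i = m := by
  rw [mFourier_coe_apply, Complex.exp_eq_one_iff]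
  refine exists_congr fun m => ?_
  rw [mul_comm (m : ℂ), mul_right_inj' (by simp [Real.pi_ne_zero])]
  exact_mod_cast Iff.rfl

end UnitAddTorus

/-- Kronecker's theorem on simultaneous inhomogeneous Diophantine approximation. -/
theorem kronecker_inhomogeneous (k : ℕ) (θ φ : Fin k → ℝ)
    (h : ∀ a : Fin k → ℤ, (∃ m : ℤ, ∑ i, (a i : ℝ) * θ i = m) →
      ∃ m : ℤ, ∑ i, (a i : ℝ) * φ i = m) :
    ∀ ε : ℝ, 0 < ε → ∃ (n : ℕ) (r : Fin k → ℤ),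
      ∀ i, |(n : ℝ) * θ i - r i - φ i| ≤ ε := by
  intro ε hε
  let x : UnitAddTorus (Fin k) := fun i => θ i
  let y : UnitAddTorus (Fin k) := fun i => φ i
  have hy : y ∈ closure (range fun n : ℕ => n • x) := by
    rw [← closure_range_zsmul_eq_nsmul, ← AddSubgroup.coe_zmultiples,
      ← AddSubgroup.topologicalClosure_coe]
    refine AddSubgroup.mem_of_forall_map_eq_one _ (fun n => UnitAddTorus.mFourier_apply_add n)
      UnitAddTorus.span_mFourier_closure_eq_top (AddSubgroup.isClosed_topologicalClosure _)
      fun a ha => ?_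
    have hx := ha x (AddSubgroup.le_topologicalClosure _ (AddSubgroup.mem_zmultiples x))
    exact (UnitAddTorus.mFourier_coe_eq_one_iff a φ).mpr
      (h a ((UnitAddTorus.mFourier_coe_eq_one_iff a θ).mp hx))
  obtain ⟨_, ⟨n, rfl⟩, hn⟩ := Metric.mem_closure_iff.mp hy ε hε
  refine ⟨n, fun i => round ((n : ℝ) * θ i - φ i), fun i => ?_⟩
  calc |(n : ℝ) * θ i - round ((n : ℝ) * θ i - φ i) - φ i|
      = ‖(((n : ℝ) * θ i - φ i : ℝ) : UnitAddCircle)‖ := by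
        rw [UnitAddCircle.norm_eq]; ring_nf
    _ = dist ((n • x) i) (y i) := by
        rw [dist_eq_norm, AddCircle.coe_sub, Pi.smul_apply, ← AddCircle.coe_nsmul, nsmul_eq_mul]
    _ ≤ dist y (n • x) := by rw [dist_comm]; exact dist_le_pi_dist _ _ i
    _ ≤ ε := hn.le
end

section
/- Let θ ∈ ℝ with θ/(2π) irrational, and define u_n = 1 − n + n·cos(nθ). Then u_n > 0 for infinitely many n ∈ ℕ. -/
/-!
Write `θ = 2πξ` with `ξ` irrational. Dirichlet's theorem gives `|nξ - m| < 1/n` for infinitely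
many `n`; for those, `nθ` lies within `2π/n` of a multiple of `2π`, so
`cos (nθ) ≥ 1 - 2π²/n² > 1 - 1/n` as soon as `n > 2π²`, which is exactly `u_n > 0`.
-/

open Real Set

lemma one_sub_two_mul_pi_sq_mul_sq_le_cos (t : ℝ) :
    1 - 2 * π ^ 2 * (t - round t) ^ 2 ≤ cos (2 * π * t) := by
  have hperiod : cos (2 * π * t) = cos (2 * π * (t - round t)) := by
    rw [← cos_sub_int_mul_two_pi (2 * π * t) (round t)]
    ring_nf
  rw [hperiod]
  linarith [one_sub_sq_div_two_le_cos (x := 2 * π * (t - round t))]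

/-- If the set were finite, its element nearest to `ℤ` would be beaten by Dirichlet's theorem,
since irrationality keeps that element off `ℤ`. -/
theorem Irrational.infinite_setOf_abs_mul_sub_round_lt {ξ : ℝ} (hξ : Irrational ξ) :
    {n : ℕ | |n * ξ - round (n * ξ)| < 1 / n}.Infinite := by
  set S := {n : ℕ | |n * ξ - round (n * ξ)| < 1 / n}
  have dirichlet : ∀ M : ℕ, 0 < M → ∃ k ∈ S, |k * ξ - round (k * ξ)| ≤ 1 / (M + 1) := by
    intro M hM
    obtain ⟨k, hk₀, hkM, hk⟩ := Real.exists_nat_abs_mul_sub_round_le ξ hM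
    refine ⟨k, hk.trans_lt ?_, hk⟩
    gcongr
    exact_mod_cast hkM.trans_lt M.lt_succ_self
  by_contra hS
  obtain ⟨n, hnS, -⟩ := dirichlet 1 one_pos
  obtain ⟨n₀, hn₀S, hmin⟩ :=
    exists_min_image S (fun n : ℕ ↦ |n * ξ - round (n * ξ)|) (not_infinite.mp hS) ⟨n, hnS⟩
  have hn₀ : n₀ ≠ 0 := by
    rintro rfl
    simp [S] at hn₀S
  have hpos : 0 < |n₀ * ξ - round (n₀ * ξ)| :=
    abs_pos.mpr (sub_ne_zero.mpr ((hξ.natCast_mul hn₀).ne_int _))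
  obtain ⟨M, hM⟩ := exists_nat_gt (1 / |n₀ * ξ - round (n₀ * ξ)|)
  have hM₀ : 0 < M := by exact_mod_cast (one_div_pos.mpr hpos).trans hM
  obtain ⟨k, hkS, hk⟩ := dirichlet M hM₀
  have hbeaten : 1 / ((M : ℝ) + 1) < |n₀ * ξ - round (n₀ * ξ)| := by
    rw [one_div_lt (by positivity) hpos]
    linarith
  exact (hk.trans_lt hbeaten).not_ge (hmin k hkS)

lemma one_sub_one_div_lt_cos_of_abs_mul_sub_round_lt {ξ : ℝ} {n : ℕ} (hn : 2 * π ^ 2 < n)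
    (h : |n * ξ - round (n * ξ)| < 1 / n) : 1 - 1 / n < cos (2 * π * (n * ξ)) := by
  have hn₀ : (0 : ℝ) < n := (by positivity : (0 : ℝ) < 2 * π ^ 2).trans hn
  have hsq : (n * ξ - round (n * ξ)) ^ 2 < 1 / n ^ 2 := by
    rw [← sq_abs, ← one_div_pow]
    exact pow_lt_pow_left₀ h (abs_nonneg _) two_ne_zero
  calc 1 - 1 / (n : ℝ) < 1 - 2 * π ^ 2 * (1 / n ^ 2) := by
        rw [← sub_pos]
        field_simp
        linarith
    _ ≤ 1 - 2 * π ^ 2 * (n * ξ - round (n * ξ)) ^ 2 := by gcongr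
    _ ≤ cos (2 * π * (n * ξ)) := one_sub_two_mul_pi_sq_mul_sq_le_cos _

/-- For `θ/(2π)` irrational, `u_n = 1 - n + n·cos(nθ)` is positive infinitely often. -/
theorem counterexample_pos_infinitely_often (θ : ℝ) (hθ : Irrational (θ / (2 * Real.pi))) :
    {n : ℕ | 0 < 1 - (n : ℝ) + (n : ℝ) * Real.cos (n * θ)}.Infinite := by
  have hθ_mul : ∀ n : ℕ, (n : ℝ) * θ = 2 * π * (n * (θ / (2 * π))) := fun n ↦ by
    field_simp
  have two_pi_sq_lt : 2 * π ^ 2 < 20 := by nlinarith [pi_pos, pi_lt_d2]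
  refine (hθ.infinite_setOf_abs_mul_sub_round_lt.sdiff (finite_Iio 20)).mono ?_
  rintro n ⟨hn, hn_lt⟩
  have hn20 : (20 : ℝ) ≤ n := by exact_mod_cast not_lt.mp hn_lt
  have hcos := one_sub_one_div_lt_cos_of_abs_mul_sub_round_lt (by linarith) hn
  rw [← hθ_mul] at hcos
  have hn₀ : (0 : ℝ) < n := by linarith
  show 0 < 1 - (n : ℝ) + n * cos (n * θ)
  have hscaled := mul_lt_mul_of_pos_left hcos hn₀
  rw [mul_sub, mul_one_div_cancel hn₀.ne'] at hscaled
  linarith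
end

section
/- Let θ ∈ ℝ with θ/(2π) irrational, and define u_n = 1 − n + n·cos(nθ). Then for every p ∈ ℕ there exists n ∈ ℕ such that u_{n+k} ≤ 0 for all k ∈ {0, 1, ..., p−1}. -/
open Real AddSubgroup

instance myfact : Fact ((0:ℝ) < 2 * Real.pi) := ⟨by positivity⟩


set_option maxHeartbeats 1000000 in
lemma aux_dense (θ : ℝ) (hθ : Irrational (θ / (2 * Real.pi))) :
    DenseRange (fun n : ℕ => n • (θ : AddCircle (2 * Real.pi))) := by
  rw [← denseRange_zsmul_iff_nsmul]
  have hR : Dense ((AddSubgroup.closure {θ, 2 * Real.pi} : AddSubgroup ℝ) : Set ℝ) := by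
    rcases AddSubgroup.dense_or_cyclic (AddSubgroup.closure {θ, 2 * Real.pi}) with h | ⟨a, ha⟩
    · exact h
    · exfalso
      have hθm : θ ∈ AddSubgroup.closure {θ, 2 * Real.pi} :=
        AddSubgroup.subset_closure (Set.mem_insert _ _)
      have hTm : 2 * Real.pi ∈ AddSubgroup.closure {θ, 2 * Real.pi} :=
        AddSubgroup.subset_closure (Set.mem_insert_of_mem _ rfl)
      rw [ha, AddSubgroup.mem_closure_singleton] at hθm hTm
      obtain ⟨m, hm⟩ := hθm
      obtain ⟨n, hn⟩ := hTm
      have hpi : (2 * Real.pi) ≠ 0 := by positivity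
      have hn0 : n ≠ 0 := by
        rintro rfl
        rw [zero_zsmul] at hn
        exact hpi hn.symm
      have hn0' : (n : ℝ) ≠ 0 := Int.cast_ne_zero.mpr hn0
      apply hθ
      refine ⟨(m : ℚ) / (n : ℚ), ?_⟩
      push_cast
      rw [div_eq_div_iff hn0' hpi, ← hm, ← hn]
      simp only [zsmul_eq_mul]; ring
  let mk : ℝ →+ AddCircle (2 * Real.pi) := QuotientAddGroup.mk' (zmultiples (2 * Real.pi))
  have hmkcont : Continuous mk := AddCircle.continuous_mk' _
  have hmksurj : Function.Surjective mk := QuotientAddGroup.mk'_surjective _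
  have himg : Dense (mk '' ((AddSubgroup.closure {θ, 2 * Real.pi} : AddSubgroup ℝ) : Set ℝ)) :=
    hmksurj.denseRange.dense_image hmkcont hR
  have hle : AddSubgroup.closure {θ, 2 * Real.pi} ≤
      (zmultiples ((θ : AddCircle (2 * Real.pi)))).comap mk := by
    rw [AddSubgroup.closure_le]
    rintro x (rfl | rfl)
    · rw [SetLike.mem_coe, AddSubgroup.mem_comap, QuotientAddGroup.mk'_apply]
      exact AddSubgroup.mem_zmultiples _
    · rw [SetLike.mem_coe, AddSubgroup.mem_comap, QuotientAddGroup.mk'_apply,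
        AddCircle.coe_period]
      exact zero_mem _
  have hsub : mk '' ((AddSubgroup.closure {θ, 2 * Real.pi} : AddSubgroup ℝ) : Set ℝ) ⊆
      ((zmultiples ((θ : AddCircle (2 * Real.pi)))) : Set (AddCircle (2 * Real.pi))) := by
    rintro x ⟨y, hy, rfl⟩
    exact hle hy
  have hdz : Dense ((zmultiples ((θ : AddCircle (2 * Real.pi)))) :
      Set (AddCircle (2 * Real.pi))) := himg.mono hsub
  have hr : Set.range (fun z : ℤ => z • (θ : AddCircle (2 * Real.pi))) =
      ((zmultiples ((θ : AddCircle (2 * Real.pi)))) : Set (AddCircle (2 * Real.pi))) := by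
    ext x
    simp [AddSubgroup.mem_zmultiples_iff, eq_comm]
  rw [DenseRange, hr]
  exact hdz


lemma aux_ne_zero (θ : ℝ) (hθ : Irrational (θ / (2 * Real.pi))) :
    ∀ m : ℤ, m ≠ 0 → (m • (θ : AddCircle (2 * Real.pi)) : AddCircle (2 * Real.pi)) ≠ 0 := by
  intro m hm h
  rw [← AddCircle.coe_zsmul, AddCircle.coe_eq_zero_iff] at h
  obtain ⟨j, hj⟩ := h
  apply hθ
  refine ⟨(j : ℚ) / (m : ℚ), ?_⟩
  have hm' : (m : ℝ) ≠ 0 := Int.cast_ne_zero.mpr hm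
  have hpi : (2 * Real.pi) ≠ 0 := by positivity
  push_cast
  rw [div_eq_div_iff hm' hpi]
  simp only [zsmul_eq_mul] at hj
  linarith [hj]

theorem aux_main (θ : ℝ) (hθ : Irrational (θ / (2 * Real.pi)))
    (haux : DenseRange (fun n : ℕ => n • (θ : AddCircle (2 * Real.pi)))) :
    ∀ p : ℕ, ∃ n : ℕ, ∀ k < p,
      1 - ((n + k : ℕ) : ℝ) + ((n + k : ℕ) : ℝ) * Real.cos ((n + k : ℕ) * θ) ≤ 0 := by
  intro p
  rcases Nat.eq_zero_or_pos p with rfl | hp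
  · exact ⟨0, fun k hk => absurd hk (Nat.not_lt_zero k)⟩
  set θ' : AddCircle (2 * Real.pi) := (θ : AddCircle (2 * Real.pi)) with hθ'def
  have hne : ∀ k : ℕ, (0:ℝ) < dist θ' (-(k • θ')) := by
    intro k
    rw [dist_pos]
    intro h
    apply aux_ne_zero θ hθ ((k:ℤ) + 1) (by omega)
    rw [add_zsmul, one_zsmul, natCast_zsmul, ← hθ'def]
    nth_rewrite 2 [h]
    simp
  have hpne : (Finset.range p).Nonempty := ⟨0, Finset.mem_range.mpr hp⟩
  set δ0 : ℝ := (Finset.range p).inf' hpne (fun k => dist θ' (-(k • θ'))) with hδ0def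
  have hδ0pos : 0 < δ0 := by
    rw [hδ0def, Finset.lt_inf'_iff]
    exact fun k _ => hne k
  set ρ : ℝ := min (δ0 / 2) 1 with hρdef
  have hρpos : 0 < ρ := lt_min (by linarith) one_pos
  have hρle1 : ρ ≤ 1 := min_le_right _ _
  have hρlepi : ρ ≤ Real.pi := hρle1.trans (by linarith [Real.pi_gt_three])
  have hρled : ρ ≤ δ0 / 2 := min_le_left _ _
  have hcos1 : Real.cos ρ < 1 := by
    have := Real.cos_lt_cos_of_nonneg_of_le_pi le_rfl hρlepi hρpos
    rwa [Real.cos_zero] at this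
  set N : ℕ := ⌈(1 - Real.cos ρ)⁻¹⌉₊ + 1 with hNdef
  have hN : ∀ m : ℕ, N ≤ m → Real.cos ρ ≤ 1 - 1 / (m : ℝ) := by
    intro m hm
    have h2 : (0:ℝ) < 1 - Real.cos ρ := by linarith
    have h1 : (1 - Real.cos ρ)⁻¹ ≤ (m : ℝ) := by
      calc (1 - Real.cos ρ)⁻¹ ≤ (⌈(1 - Real.cos ρ)⁻¹⌉₊ : ℝ) := Nat.le_ceil _
        _ ≤ (m : ℝ) := by exact_mod_cast Nat.le_of_lt (by omega)
    have hm0 : (0:ℝ) < (m : ℝ) := lt_of_lt_of_le (inv_pos.mpr h2) h1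
    have h3 : (1:ℝ) ≤ (m:ℝ) * (1 - Real.cos ρ) := by
      have := mul_le_mul_of_nonneg_right h1 h2.le
      rwa [inv_mul_cancel₀ h2.ne'] at this
    have h4 : 1 / (m:ℝ) ≤ 1 - Real.cos ρ := by
      rw [div_le_iff₀ hm0]
      nlinarith [h3]
    linarith
  obtain ⟨n, hn⟩ := haux.exists_dist_lt (θ' - N • θ') hρpos
  refine ⟨n + N, ?_⟩
  intro k hk
  have hkd : δ0 ≤ dist θ' (-(k • θ')) := by
    rw [hδ0def]
    exact Finset.inf'_le _ (Finset.mem_range.mpr hk)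
  have hclose : dist ((n + N) • θ') θ' < ρ := by
    have h2 : dist ((n + N) • θ') θ' = dist (n • θ') (θ' - N • θ') := by
      rw [add_nsmul, dist_eq_norm, dist_eq_norm]
      congr 1
      abel
    rw [h2, dist_comm]
    exact hn
  have hfar : ρ ≤ dist ((n + N + k) • θ') 0 := by
    have h1 : dist ((n + N + k) • θ') 0 = dist ((n + N) • θ') (-(k • θ')) := by
      rw [add_nsmul, dist_eq_norm, dist_eq_norm]
      congr 1
      abel
    rw [h1]
    have htri := dist_triangle θ' ((n + N) • θ') (-(k • θ'))
    have hcomm : dist θ' ((n + N) • θ') = dist ((n + N) • θ') θ' := dist_comm _ _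
    linarith
  have hmN : N ≤ n + N + k := by omega
  have hm1 : 1 ≤ n + N + k := by omega
  set M : ℝ := ((n + N + k : ℕ) : ℝ) with hMdef
  have hM1 : (1:ℝ) ≤ M := by rw [hMdef]; exact_mod_cast hm1
  have hsmul : ((n + N + k) • θ' : AddCircle (2 * Real.pi)) = ((M * θ : ℝ) : AddCircle (2 * Real.pi)) := by
    rw [hθ'def, ← AddCircle.coe_nsmul, nsmul_eq_mul, hMdef]
  set j : ℤ := round ((2 * Real.pi)⁻¹ * (M * θ)) with hjdef
  have hnorm : ‖((M * θ : ℝ) : AddCircle (2 * Real.pi))‖ = |M * θ - j * (2 * Real.pi)| := by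
    rw [hjdef]
    exact AddCircle.norm_eq _
  have hle : |M * θ - j * (2 * Real.pi)| ≤ Real.pi := by
    have h5 := AddCircle.norm_le_half_period (2 * Real.pi)
      (x := ((M * θ : ℝ) : AddCircle (2 * Real.pi))) (by positivity)
    rw [hnorm, abs_of_pos (by positivity : (0:ℝ) < 2 * Real.pi)] at h5
    linarith
  have hge : ρ ≤ |M * θ - j * (2 * Real.pi)| := by
    rw [← hnorm, ← dist_zero_right, ← hsmul]
    exact hfar
  have hcosm : Real.cos (M * θ) ≤ Real.cos ρ := by
    have h1 := Real.cos_add_int_mul_two_pi (M * θ - j * (2 * Real.pi)) j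
    rw [sub_add_cancel] at h1
    rw [h1, ← Real.cos_abs]
    exact Real.cos_le_cos_of_nonneg_of_le_pi hρpos.le hle hge
  have hcosfin : Real.cos (M * θ) ≤ 1 - 1 / M := by
    refine hcosm.trans ?_
    rw [hMdef]
    exact hN _ hmN
  have hMne : M ≠ 0 := by linarith
  have hfield : M * (1 - 1 / M) = M - 1 := by field_simp
  have hmul := mul_le_mul_of_nonneg_left hcosfin (by linarith : (0:ℝ) ≤ M)
  linarith

/-- For `θ/(2π)` irrational and `u_n = 1 - n + n·cos(nθ)`, for every `p` there are `p`
consecutive indices where the sequence is `≤ 0`. -/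
theorem counterexample_long_nonpos_runs (θ : ℝ) (hθ : Irrational (θ / (2 * Real.pi))) :
    ∀ p : ℕ, ∃ n : ℕ, ∀ k < p,
      1 - ((n + k : ℕ) : ℝ) + ((n + k : ℕ) : ℝ) * Real.cos ((n + k : ℕ) * θ) ≤ 0 :=
  aux_main θ hθ (aux_dense θ hθ)
end

section
/- The sequence u_n = 1 − n + n·cos(nθ), for θ/(2π) irrational, has a sign description that is not almost periodic: the letter '+' occurs infinitely often in the word (sgn(u_n))_{n∈ℕ}, but the gaps between consecutive occurrences of '+' are unbounded. -/
/-- `w` occurs at position `n` of the infinite word `α`. -/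
def Occurs {A : Type*} (w : List A) (α : ℕ → A) (n : ℕ) : Prop :=
  ∀ i (h : i < w.length), w.get ⟨i, h⟩ = α (n + i)

/-- `α` is almost periodic. -/
def AlmostPeriodic {A : Type*} (α : ℕ → A) : Prop :=
  ∀ w : List A, ∃ p : ℕ,
    (∀ n, p ≤ n → ¬ Occurs w α n) ∨
    (∀ n : ℕ, ∃ m, n ≤ m ∧ m + w.length ≤ n + p ∧ Occurs w α m)

/-!
Write `u n = 1 - n (1 - cos nθ)`. Dirichlet's theorem gives infinitely many `k` with
`‖k θ / 2π‖ < 1 / k`; for these `1 - cos kθ < 2π² / k²`, so `u k > 0` once `k ≥ 20`.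
On the other hand, irrationality keeps `cos θ, …, cos pθ` below some `c < 1`, hence also
`cos nθ, …, cos (n + p - 1)θ` whenever `nθ` is close to `θ` modulo `2π`. The rotation by `θ`
of the compact circle is recurrent, so this happens for arbitrarily large `n`, and then
`n (1 - c) > 1` makes the whole block negative. A letter that occurs infinitely often but
with unbounded gaps contradicts almost periodicity.
-/

open Real Filter Topology

theorem occurs_singleton_iff {A : Type*} {a : A} {α : ℕ → A} {n : ℕ} :
    Occurs [a] α n ↔ α n = a := by
  simp [Occurs, eq_comm]

theorem not_almostPeriodic_of_infinite_of_forall_exists_gap {A : Type*} {α : ℕ → A} {a : A}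
    (hinf : {n | α n = a}.Infinite) (hgap : ∀ p, ∃ n, ∀ k < p, α (n + k) ≠ a) :
    ¬ AlmostPeriodic α := by
  intro hα
  obtain ⟨p, hnever | hsyndetic⟩ := hα [a]
  · obtain ⟨m, hm, hpm⟩ := hinf.exists_gt p
    exact hnever m hpm.le (occurs_singleton_iff.2 hm)
  · obtain ⟨n, hn⟩ := hgap p
    obtain ⟨m, hnm, hmp, hocc⟩ := hsyndetic n
    obtain ⟨k, rfl⟩ := Nat.exists_eq_add_of_le hnm
    exact hn k (by simp only [List.length_singleton] at hmp; omega) (occurs_singleton_iff.1 hocc)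

theorem frequently_abs_mul_sub_round_lt_inv {ξ : ℝ} (hξ : Irrational ξ) :
    ∃ᶠ k : ℕ in atTop, |k * ξ - round (k * ξ)| < 1 / k := by
  refine frequently_atTop.2 fun K ↦ ?_
  have hpos : ∀ k ∈ Finset.Icc 1 K, 0 < |k * ξ - round (k * ξ)| := fun k hk ↦
    abs_pos.2 <| sub_ne_zero.2 <|
      (hξ.natCast_mul (Nat.one_le_iff_ne_zero.1 (Finset.mem_Icc.1 hk).1)).ne_int _
  obtain ⟨n, hn0, hn⟩ : ∃ n : ℕ, 0 < n ∧
      ∀ k ∈ Finset.Icc 1 K, 1 / ((n : ℝ) + 1) < |k * ξ - round (k * ξ)| :=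
    ((eventually_gt_atTop 0).and <| (eventually_all_finset _).2 fun k hk ↦
      tendsto_one_div_add_atTop_nhds_zero_nat.eventually_lt_const (hpos k hk)).exists
  obtain ⟨k, hk0, hkn, hk⟩ := exists_nat_abs_mul_sub_round_le ξ hn0
  refine ⟨k, ?_, hk.trans_lt ?_⟩
  · by_contra! hkK
    exact (hn k (Finset.mem_Icc.2 ⟨hk0, hkK.le⟩)).not_ge hk
  · gcongr
    exact_mod_cast hkn.trans_lt n.lt_succ_self

noncomputable def cosSeq (θ : ℝ) (n : ℕ) : ℝ := 1 - n + n * cos (n * θ)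

theorem cosSeq_pos_of_abs_mul_sub_round_lt {θ : ℝ} {k : ℕ} (hk : 20 ≤ k)
    (h : |k * (θ / (2 * π)) - round (k * (θ / (2 * π)))| < 1 / k) : 0 < cosSeq θ k := by
  set e := k * (θ / (2 * π)) - round (k * (θ / (2 * π))) with he
  have hk20 : (20 : ℝ) ≤ k := by exact_mod_cast hk
  have hcos : cos (k * θ) = cos (2 * π * e) := by
    rw [← cos_sub_int_mul_two_pi (k * θ) (round (k * (θ / (2 * π)))), he]
    field_simp
  have hke : k ^ 2 * e ^ 2 < 1 := by
    have hek : |e| * k < 1 := (lt_div_iff₀ (by positivity)).1 h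
    calc (k : ℝ) ^ 2 * e ^ 2 = (|e| * k) ^ 2 := by rw [mul_pow, sq_abs]; ring
      _ < 1 := pow_lt_one₀ (by positivity) hek two_ne_zero
  have hπ : π ^ 2 < 10 := by nlinarith [pi_lt_d2, pi_pos]
  have hcos_ge := one_sub_sq_div_two_le_cos (x := 2 * π * e)
  rw [cosSeq, hcos]
  nlinarith [sq_nonneg e, sq_nonneg π]

theorem infinite_setOf_cosSeq_pos {θ : ℝ} (hθ : Irrational (θ / (2 * π))) :
    {n : ℕ | 0 < cosSeq θ n}.Infinite :=
  Nat.frequently_atTop_iff_infinite.1 <|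
    ((frequently_abs_mul_sub_round_lt_inv hθ).and_eventually (eventually_ge_atTop 20)).mono
      fun _ ⟨h, hk⟩ ↦ cosSeq_pos_of_abs_mul_sub_round_lt hk h

instance : CompactSpace Real.Angle :=
  haveI : Fact (0 < 2 * π) := ⟨two_pi_pos⟩
  inferInstanceAs (CompactSpace (AddCircle (2 * π)))

theorem cos_nat_mul_lt_one {θ : ℝ} (hθ : Irrational (θ / (2 * π))) {m : ℕ} (hm : m ≠ 0) :
    cos (m * θ) < 1 := by
  refine (cos_le_one _).lt_of_ne fun h ↦ ?_
  obtain ⟨j, hj⟩ := (cos_eq_one_iff _).1 h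
  refine (hθ.natCast_mul hm).ne_int j ?_
  rw [mul_div_assoc', ← hj]
  field_simp

theorem exists_frequently_forall_cos_lt {θ : ℝ} (hθ : Irrational (θ / (2 * π))) (p : ℕ) :
    ∃ c < 1, ∃ᶠ n : ℕ in atTop, ∀ k < p, cos ((n + k : ℕ) * θ) < c := by
  set α := (θ : Angle)
  have hcos : ∀ n : ℕ, Angle.cos (n • α) = cos (n * θ) := fun n ↦ by
    rw [← Angle.coe_nsmul, Angle.cos_coe, nsmul_eq_mul]
  obtain ⟨c, hc, hlt⟩ : ∃ c < 1, ∀ k ∈ Finset.range p, cos ((k + 1 : ℕ) * θ) < c := by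
    have h : ∀ᶠ c in 𝓝[<] (1 : ℝ), ∀ k ∈ Finset.range p, cos ((k + 1 : ℕ) * θ) < c :=
      (eventually_all_finset _).2 fun k _ ↦
        eventually_nhdsWithin_of_eventually_nhds <|
          eventually_gt_nhds (cos_nat_mul_lt_one hθ k.succ_ne_zero)
    exact (eventually_mem_nhdsWithin.and h).exists
  have hU : ∀ᶠ y in 𝓝 α, ∀ k ∈ Finset.range p, Angle.cos (y + k • α) < c := by
    refine (eventually_all_finset _).2 fun k hk ↦ ?_
    refine Tendsto.eventually_lt_const (v := Angle.cos (α + k • α)) ?_ ?_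
    · rw [← succ_nsmul', hcos]
      exact hlt k hk
    · exact (Angle.continuous_cos.comp (continuous_add_const _)).tendsto _
  refine ⟨c, hc, (mapClusterPt_iff_frequently.1 (mapClusterPt_self_atTop_nsmul α) _ hU).mono
    fun n hn k hk ↦ ?_⟩
  rw [← hcos, add_nsmul]
  exact hn k (Finset.mem_range.2 hk)

theorem exists_forall_cosSeq_add_neg {θ : ℝ} (hθ : Irrational (θ / (2 * π))) (p : ℕ) :
    ∃ n : ℕ, ∀ k < p, cosSeq θ (n + k) < 0 := by
  obtain ⟨c, hc, hfreq⟩ := exists_frequently_forall_cos_lt hθ p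
  obtain ⟨n, hn, hN⟩ := (hfreq.and_eventually (eventually_gt_atTop ⌈1 / (1 - c)⌉₊)).exists
  refine ⟨n, fun k hk ↦ ?_⟩
  have hlarge : 1 / (1 - c) < (n + k : ℕ) := Nat.lt_of_ceil_lt (hN.trans_le (n.le_add_right k))
  rw [div_lt_iff₀ (by linarith)] at hlarge
  have hcos := hn k hk
  rw [cosSeq]
  nlinarith

/-- The sign description of `u_n = 1 - n + n·cos(nθ)` (for `θ/(2π)` irrational) is not
almost periodic: the letter `+` occurs infinitely often, but with unbounded gaps. -/
theorem counterexample_not_almost_periodic (θ : ℝ) (hθ : Irrational (θ / (2 * Real.pi)))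
    (σ : ℕ → SignType)
    (hσ : ∀ n : ℕ, σ n = SignType.sign (1 - (n : ℝ) + (n : ℝ) * Real.cos (n * θ))) :
    {n : ℕ | σ n = 1}.Infinite ∧
    (∀ p : ℕ, ∃ n : ℕ, ∀ k < p, σ (n + k) ≠ 1) ∧
    ¬ AlmostPeriodic σ := by
  have hσ_one : ∀ n, σ n = 1 ↔ 0 < cosSeq θ n := fun n ↦ by rw [hσ, sign_eq_one_iff, cosSeq]
  have hinf : {n : ℕ | σ n = 1}.Infinite := by
    simpa only [hσ_one] using infinite_setOf_cosSeq_pos hθ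
  have hgap : ∀ p : ℕ, ∃ n : ℕ, ∀ k < p, σ (n + k) ≠ 1 := fun p ↦
    (exists_forall_cosSeq_add_neg hθ p).imp fun n hn k hk ↦ by
      rw [Ne, hσ_one, not_lt]
      exact (hn k hk).le
  exact ⟨hinf, hgap, not_almostPeriodic_of_infinite_of_forall_exists_gap hinf hgap⟩
end

section
/- Let Q be a finite set and 𝔐 the monoid whose elements are functions Q → Q × 𝒫(Q) (deterministic labeled graphs: each state has one outgoing edge labeled by a subset of Q), with product defined by composing edges and taking the union of labels. If x̄₁ x̄₂ ⋯ x̄_k is an increasing product (i.e., for some q ∈ Q, the label seen from q in x̄₁ is a strict subset of the label seen from q in the full product), then there exists i ∈ {1,...,k−1} such that x̄ᵢ x̄_{i+1} is increasing; moreover, for all 1 ≤ r ≤ i and i < r′ ≤ k, the product x̄_r x̄_{r+1} ⋯ x̄_{r′} is increasing. -/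
variable {Q : Type*}

/-- Elements of the monoid `𝔐`: deterministic graphs over `Q` where each state has one
outgoing edge, labeled by a subset of `Q`. -/
def GElem (Q : Type*) := Q → Q × Set Q

/-- Product in `𝔐`: compose edges and take the union of the labels. -/
def GMul (x y : GElem Q) : GElem Q :=
  fun q => ((y (x q).1).1, (x q).2 ∪ (y (x q).1).2)

/-- Product `x̄ᵢ x̄_{i+1} ⋯ x̄_{i+n-1}` of `n` consecutive elements starting at index `i`. -/
def GProd (x : ℕ → GElem Q) (i : ℕ) : ℕ → GElem Q
  | 0 => fun q => (q, ∅)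
  | n + 1 => GMul (GProd x i n) (x (i + n))

/-- The product `x̄_r x̄_{r+1} ⋯ x̄_{r'}` is increasing: for some state `q`, the set of
states seen from `q` in `x̄_r` is a strict subset of the states seen from `q` in the
full product. -/
def Increasing (x : ℕ → GElem Q) (r r' : ℕ) : Prop :=
  ∃ q : Q, ((x r) q).2 ⊂ ((GProd x r (r' - r + 1)) q).2

lemma gprod_add (x : ℕ → GElem Q) (i a b : ℕ) (q : Q) :
    GProd x i (a + b) q =
      ((GProd x (i + a) b (GProd x i a q).1).1,
       (GProd x i a q).2 ∪ (GProd x (i + a) b (GProd x i a q).1).2) := by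
  induction b with
  | zero => simp [GProd]
  | succ b ih =>
      show GMul (GProd x i (a + b)) (x (i + (a + b))) q = _
      rw [show GProd x (i + a) (b + 1) = GMul (GProd x (i + a) b) (x (i + a + b)) from rfl]
      simp [GMul, ih, Set.union_assoc, Nat.add_assoc]

lemma gprod_mono (x : ℕ → GElem Q) (i : ℕ) {n n' : ℕ} (h : n ≤ n') (q : Q) :
    (GProd x i n q).2 ⊆ (GProd x i n' q).2 := by
  obtain ⟨b, rfl⟩ := Nat.exists_eq_add_of_le h
  rw [gprod_add]
  exact Set.subset_union_left

lemma gprod_one_snd (x : ℕ → GElem Q) (i : ℕ) (q : Q) :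
    (GProd x i 1 q).2 = (x i q).2 := by
  simp [GProd, GMul]

lemma first_subset (x : ℕ → GElem Q) (i n : ℕ) (hn : 1 ≤ n) (q : Q) :
    (x i q).2 ⊆ (GProd x i n q).2 := by
  rw [← gprod_one_snd x i q]
  exact gprod_mono x i hn q

lemma factor_subset (x : ℕ → GElem Q) (i n : ℕ) (q : Q) :
    (x (i + n) ((GProd x i n q).1)).2 ⊆ (GProd x i (n + 1) q).2 := by
  show _ ⊆ (GMul (GProd x i n) (x (i + n)) q).2
  simp [GMul]

/-- If the product `x̄₀ x̄₁ ⋯ x̄_{k-1}` is increasing, then some adjacent product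
`x̄ᵢ x̄_{i+1}` is increasing; moreover every product `x̄_r ⋯ x̄_{r'}` with `r ≤ i < r' ≤ k-1`
is increasing. -/
theorem increasing_short [Fintype Q] (x : ℕ → GElem Q) (k : ℕ) (hk : 1 ≤ k)
    (h : Increasing x 0 (k - 1)) :
    ∃ i : ℕ, i + 1 ≤ k - 1 ∧ Increasing x i (i + 1) ∧
      ∀ r r' : ℕ, r ≤ i → i < r' → r' ≤ k - 1 → Increasing x r r' := by
  classical
  have hP : ∃ m, Increasing x 0 m := ⟨k - 1, h⟩
  set m := Nat.find hP with hm
  have hPm : Increasing x 0 m := Nat.find_spec hP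
  have hmle : m ≤ k - 1 := Nat.find_min' hP h
  have hm1 : 1 ≤ m := by
    by_contra hc
    have hm0 : m = 0 := by omega
    obtain ⟨q, hq⟩ := hPm
    rw [hm0] at hq
    simp only [Nat.zero_sub, Nat.zero_add] at hq
    rw [gprod_one_snd] at hq
    exact hq.false
  have hmin : ¬ Increasing x 0 (m - 1) := Nat.find_min hP (by omega)
  have heq : ∀ q, (GProd x 0 m q).2 = (x 0 q).2 := by
    intro q
    by_contra hne
    apply hmin
    refine ⟨q, ?_⟩
    rw [show m - 1 - 0 + 1 = m by omega]
    exact (first_subset x 0 m hm1 q).ssubset_of_ne (Ne.symm hne)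
  obtain ⟨q, hq⟩ := hPm
  rw [show m - 0 + 1 = m + 1 by omega] at hq
  obtain ⟨s, hs, hsn⟩ : ∃ s, s ∈ (x m ((GProd x 0 m q).1)).2 ∧ s ∉ (x 0 q).2 := by
    obtain ⟨s, hs1, hs2⟩ := Set.exists_of_ssubset hq
    have hd : (GProd x 0 (m + 1) q).2
        = (GProd x 0 m q).2 ∪ (x (0 + m) ((GProd x 0 m q).1)).2 := rfl
    rw [hd, heq q, Nat.zero_add] at hs1
    exact ⟨s, hs1.resolve_left hs2, hs2⟩
  have hgen : ∀ r r', r ≤ m - 1 → m - 1 < r' → r' ≤ k - 1 → Increasing x r r' := by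
    intro r r' hr hr1 hr2
    have hrm : r + 1 ≤ m := by omega
    have hmr' : m ≤ r' := by omega
    set qr := (GProd x 0 r q).1 with hqr
    refine ⟨qr, ?_⟩
    have hpath : (GProd x r (m - r) qr).1 = (GProd x 0 m q).1 := by
      have h1 := congrArg Prod.fst (gprod_add x 0 r (m - r) q)
      rw [show r + (m - r) = m by omega, Nat.zero_add] at h1
      exact h1.symm
    have hB : s ∈ (GProd x r (r' - r + 1) qr).2 := by
      have h2 : s ∈ (x (r + (m - r)) ((GProd x r (m - r) qr).1)).2 := by
        rw [show r + (m - r) = m by omega, hpath]; exact hs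
      have h3 := factor_subset x r (m - r) qr h2
      exact gprod_mono x r (by omega) qr h3
    have hC : s ∉ (x r qr).2 := by
      intro hc
      apply hsn
      rw [← heq q]
      have h4 : s ∈ (x (0 + r) ((GProd x 0 r q).1)).2 := by rwa [Nat.zero_add]
      have h5 := factor_subset x 0 r q h4
      exact gprod_mono x 0 (by omega : r + 1 ≤ m) q h5
    have hD : (x r qr).2 ⊆ (GProd x r (r' - r + 1) qr).2 :=
      first_subset x r _ (by omega) qr
    exact (Set.ssubset_iff_of_subset hD).mpr ⟨s, hB, hC⟩
  exact ⟨m - 1, by omega, by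
    have := hgen (m - 1) m le_rfl (by omega) (by omega)
    rwa [show m - 1 + 1 = m by omega], hgen⟩
end
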